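/- Let G be a live-edge model on a directed graph (V, 𝓔) and let H be a monotone nondecreasing submodular utility function with H(∅) = 0. Then for every step limit τ ≥ 0, the τ-step influence function S ↦ I^τ(S) = E_E[H(ρ^τ(E,S))] is monotone nondecreasing and submodular. -/

import Mathlib

/-!
Fix one realisation `E` of the live edges. Reachability distributes over unions of seed sets,
`ρ^τ(E, S ∪ T) = ρ^τ(E, S) ∪ ρ^τ(E, T)`, so adding a seed `x` adds the fixed set `ρ^τ(E, {x})`,
and by submodularity of `H` the gain from adding a fixed set shrinks as the base set grows.
Hence `S ↦ H(ρ^τ(E, S))` is monotone and submodular, and both properties survive taking the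
nonnegative combination `∑_E p(E) H(ρ^τ(E, S))`.
-/

open Finset

section LiveEdge
variable {V : Type*} [Fintype V] [DecidableEq V]

/-- One step of live-edge diffusion: a node is activated when some live edge leads
to it from an already active node. -/
def estep (E : Finset (V × V)) (A : Finset V) : Finset V :=
  A ∪ Finset.univ.filter (fun v => ∃ u ∈ A, (u, v) ∈ E)

/-- `ereach E S τ` : the set `ρ^τ(E,S)` of nodes reachable from `S` by directed
paths of at most `τ` live edges of `E`. -/
def ereach (E : Finset (V × V)) (S : Finset V) : ℕ → Finset V
  | 0 => S
  | t + 1 => estep E (ereach E S t)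

/-- Submodularity of a set function. -/
def SubmodularFn (F : Finset V → ℝ) : Prop :=
  ∀ A B : Finset V, A ⊆ B → ∀ x ∉ B, F (insert x B) - F B ≤ F (insert x A) - F A

/-- Monotone nondecreasing set function. -/
def MonotoneFn (F : Finset V → ℝ) : Prop :=
  ∀ A B : Finset V, A ⊆ B → F A ≤ F B

end LiveEdge

section Reach
variable {V : Type*} [Fintype V] [DecidableEq V] (E : Finset (V × V))

lemma estep_union (A B : Finset V) : estep E (A ∪ B) = estep E A ∪ estep E B := by
  ext v
  simp only [estep, mem_union, mem_filter, mem_univ, true_and, or_and_right, exists_or]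
  exact or_or_or_comm

lemma ereach_union (S T : Finset V) : ∀ τ, ereach E (S ∪ T) τ = ereach E S τ ∪ ereach E T τ
  | 0 => rfl
  | t + 1 => by simp only [ereach, ereach_union S T t, estep_union]

end Reach

section SetFunction
variable {V W : Type*}

lemma subset_of_map_union [DecidableEq V] [DecidableEq W] {f : Finset V → Finset W}
    (hf : ∀ A B, f (A ∪ B) = f A ∪ f B) {A B : Finset V} (h : A ⊆ B) : f A ⊆ f B := by
  rw [← union_eq_right.2 h, hf]
  exact subset_union_left

lemma SubmodularFn.insert_sub_le_insert_sub [DecidableEq W] {H : Finset W → ℝ}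
    (hsub : SubmodularFn H) (hmono : MonotoneFn H) {A B : Finset W} (h : A ⊆ B) (x : W) :
    H (insert x B) - H B ≤ H (insert x A) - H A := by
  by_cases hx : x ∈ B
  · have := hmono A (insert x A) (subset_insert x A)
    rw [insert_eq_self.2 hx]
    linarith
  · exact hsub A B h x hx

lemma SubmodularFn.union_sub_le_union_sub [DecidableEq W] {H : Finset W → ℝ}
    (hsub : SubmodularFn H) (hmono : MonotoneFn H) {A B : Finset W} (h : A ⊆ B) (C : Finset W) :
    H (B ∪ C) - H B ≤ H (A ∪ C) - H A := by
  induction C using Finset.induction_on with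
  | empty => simp
  | insert x C _ ih =>
    have hstep := hsub.insert_sub_le_insert_sub hmono (union_subset_union_left (t := C) h) x
    simp only [union_insert] at hstep ⊢
    linarith

lemma MonotoneFn.comp_union_hom [DecidableEq V] [DecidableEq W] {H : Finset W → ℝ}
    (hmono : MonotoneFn H) {f : Finset V → Finset W} (hf : ∀ A B, f (A ∪ B) = f A ∪ f B) :
    MonotoneFn (fun S => H (f S)) :=
  fun _ _ h => hmono _ _ (subset_of_map_union hf h)

lemma SubmodularFn.comp_union_hom [DecidableEq V] [DecidableEq W] {H : Finset W → ℝ}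
    (hsub : SubmodularFn H) (hmono : MonotoneFn H) {f : Finset V → Finset W}
    (hf : ∀ A B, f (A ∪ B) = f A ∪ f B) :
    SubmodularFn (fun S => H (f S)) := by
  intro A B h x _
  simp only [← union_singleton x, hf]
  exact hsub.union_sub_le_union_sub hmono (subset_of_map_union hf h) (f {x})

lemma MonotoneFn.weightedSum {ι : Type*} (s : Finset ι) {p : ι → ℝ} (hp : ∀ i ∈ s, 0 ≤ p i)
    {F : ι → Finset V → ℝ} (hF : ∀ i ∈ s, MonotoneFn (F i)) :
    MonotoneFn (fun S => ∑ i ∈ s, p i * F i S) :=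
  fun A B h => sum_le_sum fun i hi => mul_le_mul_of_nonneg_left (hF i hi A B h) (hp i hi)

lemma SubmodularFn.weightedSum [DecidableEq V] {ι : Type*} (s : Finset ι) {p : ι → ℝ}
    (hp : ∀ i ∈ s, 0 ≤ p i) {F : ι → Finset V → ℝ} (hF : ∀ i ∈ s, SubmodularFn (F i)) :
    SubmodularFn (fun S => ∑ i ∈ s, p i * F i S) := by
  intro A B h x hx
  simp only [← sum_sub_distrib, ← mul_sub]
  exact sum_le_sum fun i hi => mul_le_mul_of_nonneg_left (hF i hi A B h x hx) (hp i hi)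

end SetFunction

theorem liveedge_influence_submodular_general {V : Type*} [Fintype V] [DecidableEq V]
    (p : Finset (V × V) → ℝ)
    (hp0 : ∀ E, 0 ≤ p E)
    (H : Finset V → ℝ)
    (hHmono : MonotoneFn H) (hHsub : SubmodularFn H) (τ : ℕ) :
    MonotoneFn (fun S : Finset V => ∑ E : Finset (V × V), p E * H (ereach E S τ)) ∧
    SubmodularFn (fun S : Finset V => ∑ E : Finset (V × V), p E * H (ereach E S τ)) :=
  ⟨MonotoneFn.weightedSum univ (fun E _ => hp0 E) fun E _ =>
      hHmono.comp_union_hom (ereach_union E · · τ),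
    SubmodularFn.weightedSum univ (fun E _ => hp0 E) fun E _ =>
      hHsub.comp_union_hom hHmono (ereach_union E · · τ)⟩

/-- **Live-edge influence functions are monotone and submodular.**  For any
live-edge model (any distribution over subsets of `𝓔`) with monotone submodular
utility `H` (`H(∅)=0`), the τ-step influence `S ↦ E_E[H(ρ^τ(E,S))]` is monotone
nondecreasing and submodular. -/
theorem liveedge_influence_submodular {V : Type*} [Fintype V] [DecidableEq V]
    (𝓔 : Finset (V × V)) (p : Finset (V × V) → ℝ)
    (hp0 : ∀ E, 0 ≤ p E) (hp1 : ∑ E : Finset (V × V), p E = 1)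
    (hsupp : ∀ E, p E ≠ 0 → E ⊆ 𝓔)
    (H : Finset V → ℝ) (hH0 : H ∅ = 0) (hHnn : ∀ S, 0 ≤ H S)
    (hHmono : MonotoneFn H) (hHsub : SubmodularFn H) (τ : ℕ) :
    MonotoneFn (fun S : Finset V => ∑ E : Finset (V × V), p E * H (ereach E S τ)) ∧
    SubmodularFn (fun S : Finset V => ∑ E : Finset (V × V), p E * H (ereach E S τ)) :=
  liveedge_influence_submodular_general p hp0 H hHmono hHsub τ
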